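/- arXiv:2411.10202 — 2 statements merged into one kernel-verified Lean document; each statement's English description precedes it below -/
import Mathlib

section
/- Let (X,d,μ) be a metric measure space with μ fully supported and finite on balls, and let r > 0. Define the averaging operator A_r u(x) = (1/μ(B_r(x))) ∫_{B_r(x)} u dμ and let A_r^* 1 (x) = ∫_{B_r(x)} μ(B_r(y))^{-1} dμ(y). If ‖A_r^* 1‖_∞ < ∞, then for every p ∈ [1,∞] the operator A_r maps L^p(X,μ) to L^p(X,μ) boundedly with operator norm at most ‖A_r^* 1‖_∞^{1/p}. -/
/-
Jensen's inequality for the probability measure `μ|_{B_r(x)} / μ(B_r(x))` bounds `|A_r u(x)|^p` by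
the local average of `|u|^p` over `B_r(x)`. Integrating in `x` and exchanging the order of
integration (Tonelli, with `y ∈ B_r(x) ↔ x ∈ B_r(y)`) turns the integral of these local averages
into `∫ A_r^* 1 · |u|^p dμ ≤ K ∫ |u|^p dμ`. For `p = ∞` an average is at most the essential
supremum. Tonelli needs `μ` to be σ-finite, which holds since balls have finite measure, and
`{(x, y) | d(x, y) < r}` to be product-measurable, which holds since a metric space carrying a
σ-finite measure that charges every ball is separable.
-/

open MeasureTheory Metric ENNReal

/-- The averaging operator `A_r u (x) = ⨍_{B_r(x)} u dμ`. -/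
noncomputable def avgOp {X : Type*} [MetricSpace X] [MeasurableSpace X]
    (μ : Measure X) (r : ℝ) (u : X → ℝ) (x : X) : ℝ :=
  ((μ (Metric.ball x r)).toReal)⁻¹ * ∫ y in Metric.ball x r, u y ∂μ

theorem enorm_integral_rpow_le_lintegral_enorm_rpow {α E : Type*} [MeasurableSpace α]
    [NormedAddCommGroup E] [NormedSpace ℝ E] (μ : Measure α) [IsProbabilityMeasure μ]
    {q : ℝ} (hq : 1 ≤ q) (f : α → E) :
    ‖∫ x, f x ∂μ‖ₑ ^ q ≤ ∫⁻ x, ‖f x‖ₑ ^ q ∂μ := by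
  have hq0 : 0 < q := zero_lt_one.trans_le hq
  by_cases hf : AEStronglyMeasurable f μ
  swap
  · simp [integral_non_aestronglyMeasurable hf, zero_rpow_of_pos hq0]
  have hLp : eLpNorm f 1 μ ≤ eLpNorm f (.ofReal q) μ :=
    eLpNorm_le_eLpNorm_of_exponent_le (by simpa using hq) hf
  rw [eLpNorm_one_eq_lintegral_enorm, eLpNorm_eq_lintegral_rpow_enorm_toReal (by simpa using hq0)
    ofReal_ne_top, toReal_ofReal hq0.le] at hLp
  calc ‖∫ x, f x ∂μ‖ₑ ^ q ≤ ((∫⁻ x, ‖f x‖ₑ ^ q ∂μ) ^ (1 / q)) ^ q :=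
        rpow_le_rpow ((enorm_integral_le_lintegral_enorm f).trans hLp) hq0.le
    _ = ∫⁻ x, ‖f x‖ₑ ^ q ∂μ := by rw [← rpow_mul, one_div_mul_cancel hq0.ne', rpow_one]

theorem enorm_average_rpow_le_laverage {α E : Type*} [MeasurableSpace α]
    [NormedAddCommGroup E] [NormedSpace ℝ E] (μ : Measure α)
    {q : ℝ} (hq : 1 ≤ q) (f : α → E) :
    ‖⨍ x, f x ∂μ‖ₑ ^ q ≤ ⨍⁻ x, ‖f x‖ₑ ^ q ∂μ := by
  have hq0 : 0 < q := zero_lt_one.trans_le hq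
  rcases eq_zero_or_neZero μ with rfl | hμ
  · simp [zero_rpow_of_pos hq0]
  by_cases hfin : IsFiniteMeasure μ
  · rw [average_eq', laverage_eq']
    exact enorm_integral_rpow_le_lintegral_enorm_rpow _ hq f
  · -- `μ univ = ∞`, so `(μ univ)⁻¹ • μ = 0` and both averages vanish
    simp [average_eq', not_isFiniteMeasure_iff.1 hfin, zero_rpow_of_pos hq0]

theorem Metric.secondCountableTopology_of_countable_of_pairwise_disjoint_balls
    {X : Type*} [PseudoMetricSpace X]
    (h : ∀ ε > 0, ∀ s : Set X, s.Pairwise (fun x y => Disjoint (ball x ε) (ball y ε)) →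
      s.Countable) :
    SecondCountableTopology X := by
  refine secondCountable_of_almost_dense_set fun ε hε => ?_
  obtain ⟨M, hM⟩ : ∃ M : Set X, Maximal (fun s => s.Pairwise fun x y => ε ≤ dist x y) M :=
    zorn_subset _ fun c hc hchain =>
      ⟨⋃₀ c, (Set.pairwise_sUnion hchain.directedOn).2 hc, fun _ => Set.subset_sUnion_of_mem⟩
  refine ⟨M, h (ε / 2) (half_pos hε) M fun x hx y hy hxy => ball_disjoint_ball ?_, fun x => ?_⟩
  · simpa using hM.prop hx hy hxy
  by_contra! hfar
  have hxM : x ∈ M := hM.mem_of_prop_insert <|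
    Set.pairwise_insert.2
      ⟨hM.prop, fun y hy _ => ⟨(hfar y hy).le, (dist_comm y x ▸ hfar y hy).le⟩⟩
  simpa [hε.not_gt] using hfar x hxM

theorem secondCountableTopology_of_measure_ball_pos
    {X : Type*} [PseudoMetricSpace X] [MeasurableSpace X] [OpensMeasurableSpace X]
    (μ : Measure X) [SFinite μ] (hμ : ∀ (x : X) (ε : ℝ), 0 < ε → 0 < μ (ball x ε)) :
    SecondCountableTopology X :=
  secondCountableTopology_of_countable_of_pairwise_disjoint_balls fun ε hε s hs => by
    have hpos : {x : s | 0 < μ (ball (x : X) ε)} = Set.univ :=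
      Set.eq_univ_of_forall fun x => hμ x ε hε
    have := Measure.countable_meas_pos_of_disjoint_iUnion (μ := μ)
      (fun x : s => measurableSet_ball) fun x y hxy => hs x.2 y.2 (Subtype.coe_ne_coe.2 hxy)
    rw [hpos] at this
    exact Set.countable_coe_iff.1 (Set.countable_univ_iff.1 this)

theorem sigmaFinite_of_measure_ball_lt_top
    {X : Type*} [PseudoMetricSpace X] [MeasurableSpace X] (μ : Measure X)
    (hμ : ∀ (x : X) (ε : ℝ), μ (ball x ε) < ⊤) : SigmaFinite μ := by
  rcases isEmpty_or_nonempty X with hX | ⟨⟨x⟩⟩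
  · rw [μ.eq_zero_of_isEmpty]; infer_instance
  · exact ⟨⟨⟨fun n => ball x n, fun _ => trivial, fun n => hμ x n, iUnion_ball_nat x⟩⟩⟩

-- Oriented so that the slice `Prod.mk x ⁻¹' _` is `ball x r` by definition.
theorem measurableSet_setOf_dist_lt {X : Type*} [PseudoMetricSpace X] [MeasurableSpace X]
    [OpensMeasurableSpace X] [SecondCountableTopology X] (r : ℝ) :
    MeasurableSet {p : X × X | dist p.2 p.1 < r} :=
  measurableSet_lt (measurable_snd.dist measurable_fst) measurable_const

section AveragingOperator

variable {X : Type*} [MetricSpace X] [MeasurableSpace X] (μ : Measure X) (r : ℝ)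

/-- `A_r^* 1`, the adjoint of `A_r` applied to the constant function `1`. -/
noncomputable def avgOpAdjOne (y : X) : ℝ≥0∞ :=
  ∫⁻ x in ball y r, (μ (ball x r))⁻¹ ∂μ

theorem avgOp_eq_setAverage (u : X → ℝ) (x : X) : avgOp μ r u x = ⨍ y in ball x r, u y ∂μ := by
  rw [setAverage_eq, measureReal_def, smul_eq_mul, avgOp]

theorem measurable_measure_ball [OpensMeasurableSpace X] [SecondCountableTopology X] [SFinite μ] :
    Measurable fun x => μ (ball x r) :=
  measurable_measure_prodMk_left (measurableSet_setOf_dist_lt r)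

variable {μ r}

theorem avgOp_congr_ae {u v : X → ℝ} (h : u =ᵐ[μ] v) : avgOp μ r u = avgOp μ r v :=
  funext fun x => by
    simp only [avgOp_eq_setAverage, average_congr (ae_restrict_of_ae h)]

theorem stronglyMeasurable_avgOp [OpensMeasurableSpace X] [SecondCountableTopology X] [SFinite μ]
    {u : X → ℝ} (hu : AEStronglyMeasurable u μ) : StronglyMeasurable (avgOp μ r u) := by
  rw [avgOp_congr_ae hu.ae_eq_mk]
  have hint : StronglyMeasurable fun x => ∫ y in ball x r, hu.mk u y ∂μ := by
    have := (hu.stronglyMeasurable_mk.comp_measurable measurable_snd).indicator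
      (measurableSet_setOf_dist_lt (X := X) r)
    simp only [← integral_indicator measurableSet_ball]
    exact this.integral_prod_right'
  exact (measurable_measure_ball μ r).ennreal_toReal.inv.stronglyMeasurable.mul hint

theorem enorm_avgOp_rpow_le {q : ℝ} (hq : 1 ≤ q) (u : X → ℝ) (x : X) :
    ‖avgOp μ r u x‖ₑ ^ q ≤ ⨍⁻ y in ball x r, ‖u y‖ₑ ^ q ∂μ := by
  rw [avgOp_eq_setAverage]
  exact enorm_average_rpow_le_laverage _ hq u

theorem lintegral_setLAverage_ball [OpensMeasurableSpace X] [SecondCountableTopology X]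
    [SFinite μ] {f : X → ℝ≥0∞} (hf : AEMeasurable f μ) :
    ∫⁻ x, ⨍⁻ y in ball x r, f y ∂μ ∂μ = ∫⁻ y, avgOpAdjOne μ r y * f y ∂μ := by
  set F := {p : X × X | dist p.2 p.1 < r}.indicator fun p => (μ (ball p.1 r))⁻¹ * f p.2
  have hF : AEMeasurable F (μ.prod μ) :=
    (((measurable_measure_ball μ r).inv.comp measurable_fst).aemeasurable.mul
      hf.comp_snd).indicator (measurableSet_setOf_dist_lt r)
  calc ∫⁻ x, ⨍⁻ y in ball x r, f y ∂μ ∂μ = ∫⁻ x, ∫⁻ y, F (x, y) ∂μ ∂μ := by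
        refine lintegral_congr fun x => ?_
        rw [setLAverage_eq, div_eq_mul_inv, mul_comm, ← lintegral_const_mul'' _ hf.restrict,
          ← lintegral_indicator measurableSet_ball]
        rfl
    _ = ∫⁻ y, ∫⁻ x, F (x, y) ∂μ ∂μ := lintegral_lintegral_swap hF
    _ = ∫⁻ y, avgOpAdjOne μ r y * f y ∂μ := by
        refine lintegral_congr fun y => ?_
        rw [avgOpAdjOne, ← lintegral_mul_const (f y) (f := fun x => (μ (ball x r))⁻¹)
          (measurable_measure_ball μ r).inv,
          ← lintegral_indicator measurableSet_ball]
        simp only [F, Set.indicator, Set.mem_ofPred_eq, mem_ball, dist_comm]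

theorem lintegral_enorm_avgOp_rpow_le [OpensMeasurableSpace X] [SecondCountableTopology X]
    [SFinite μ] {u : X → ℝ} (hu : AEStronglyMeasurable u μ) {q : ℝ} (hq : 1 ≤ q) {K : ℝ≥0∞}
    (hK : ∀ y, avgOpAdjOne μ r y ≤ K) :
    ∫⁻ x, ‖avgOp μ r u x‖ₑ ^ q ∂μ ≤ K * ∫⁻ y, ‖u y‖ₑ ^ q ∂μ :=
  calc ∫⁻ x, ‖avgOp μ r u x‖ₑ ^ q ∂μ ≤ ∫⁻ x, ⨍⁻ y in ball x r, ‖u y‖ₑ ^ q ∂μ ∂μ :=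
        lintegral_mono fun x => enorm_avgOp_rpow_le hq u x
    _ = ∫⁻ y, avgOpAdjOne μ r y * ‖u y‖ₑ ^ q ∂μ :=
        lintegral_setLAverage_ball (hu.enorm.pow_const q)
    _ ≤ ∫⁻ y, K * ‖u y‖ₑ ^ q ∂μ := lintegral_mono fun y => mul_le_mul_left (hK y) _
    _ = K * ∫⁻ y, ‖u y‖ₑ ^ q ∂μ := lintegral_const_mul'' K (hu.enorm.pow_const q)

theorem eLpNorm_avgOp_top_le (u : X → ℝ) : eLpNorm (avgOp μ r u) ∞ μ ≤ eLpNorm u ∞ μ := by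
  simp only [eLpNorm_exponent_top, eLpNormEssSup]
  refine essSup_le_of_ae_le _ (.of_forall fun x => ?_)
  simpa using (enorm_avgOp_rpow_le le_rfl u x).trans (setLAverage_le_essSup _ _)

theorem eLpNorm_avgOp_le [OpensMeasurableSpace X] [SecondCountableTopology X] [SFinite μ]
    {u : X → ℝ} (hu : AEStronglyMeasurable u μ) {p : ℝ≥0∞} (hp : 1 ≤ p) {K : ℝ≥0∞}
    (hK : ∀ y, avgOpAdjOne μ r y ≤ K) :
    eLpNorm (avgOp μ r u) p μ ≤ K ^ (1 / p).toReal * eLpNorm u p μ := by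
  rcases eq_or_ne p ∞ with rfl | hp_top
  · simpa using eLpNorm_avgOp_top_le u
  have hp0 : p ≠ 0 := (zero_lt_one.trans_le hp).ne'
  have hq : 1 ≤ p.toReal := by simpa using toReal_mono hp_top hp
  rw [eLpNorm_eq_lintegral_rpow_enorm_toReal hp0 hp_top,
    eLpNorm_eq_lintegral_rpow_enorm_toReal hp0 hp_top, one_div p, toReal_inv, ← one_div,
    ← mul_rpow_of_nonneg _ _ (by positivity)]
  exact rpow_le_rpow (lintegral_enorm_avgOp_rpow_le hu hq hK) (by positivity)

end AveragingOperator

theorem avgOp_memLp_and_eLpNorm_le_general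
    {X : Type*} [MetricSpace X] [MeasurableSpace X] [BorelSpace X]
    (μ : Measure X) (r : ℝ)
    (hfull : ∀ (x : X) (s : ℝ), 0 < s → 0 < μ (Metric.ball x s))
    (hballs : ∀ (x : X) (s : ℝ), μ (Metric.ball x s) < ⊤)
    (K : ℝ≥0∞)
    (hK : K = ⨆ x : X, ∫⁻ y in Metric.ball x r, (μ (Metric.ball y r))⁻¹ ∂μ)
    (hKtop : K < ⊤)
    (p : ℝ≥0∞) (hp : 1 ≤ p) (u : X → ℝ) (hu : MemLp u p μ) :
    MemLp (avgOp μ r u) p μ ∧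
      eLpNorm (avgOp μ r u) p μ ≤ K ^ (1 / p).toReal * eLpNorm u p μ := by
  have := sigmaFinite_of_measure_ball_lt_top μ hballs
  have := secondCountableTopology_of_measure_ball_pos μ hfull
  have hnorm := eLpNorm_avgOp_le hu.1 hp fun y => hK ▸ le_iSup (avgOpAdjOne μ r) y
  refine ⟨⟨(stronglyMeasurable_avgOp hu.1).aestronglyMeasurable, hnorm.trans_lt ?_⟩, hnorm⟩
  exact mul_lt_top (rpow_lt_top_of_nonneg toReal_nonneg hKtop.ne) hu.2

/-- If `‖A_r^* 1‖_∞ = sup_x ∫_{B_r(x)} μ(B_r(y))⁻¹ dμ(y) < ∞`, then for every `p ∈ [1, ∞]`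
the averaging operator `A_r` maps `L^p(X, μ)` to `L^p(X, μ)` boundedly, with norm at most
`‖A_r^* 1‖_∞^(1/p)`. -/
theorem avgOp_memLp_and_eLpNorm_le
    {X : Type*} [MetricSpace X] [MeasurableSpace X] [BorelSpace X]
    (μ : Measure X) (r : ℝ) (hr : 0 < r)
    (hfull : ∀ (x : X) (s : ℝ), 0 < s → 0 < μ (Metric.ball x s))
    (hballs : ∀ (x : X) (s : ℝ), μ (Metric.ball x s) < ⊤)
    (K : ℝ≥0∞)
    (hK : K = ⨆ x : X, ∫⁻ y in Metric.ball x r, (μ (Metric.ball y r))⁻¹ ∂μ)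
    (hKtop : K < ⊤)
    (p : ℝ≥0∞) (hp : 1 ≤ p) (u : X → ℝ) (hu : MemLp u p μ) :
    MemLp (avgOp μ r u) p μ ∧
      eLpNorm (avgOp μ r u) p μ ≤ K ^ (1 / p).toReal * eLpNorm u p μ :=
  avgOp_memLp_and_eLpNorm_le_general μ r hfull hballs K hK hKtop p hp u hu
end

section
/- There holds liminf_{r → 0} inf_{p ∈ ℤ^m, p ≠ 0} | r^{-2} ( 1 − ∏_{i : p_i ≠ 0} sinc(p_i r) ) | > 0, where sinc(ρ) = sin(πρ)/(πρ) for ρ ≠ 0 and sinc(0) = 1. -/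
/-!
A factor with `pᵢ ≠ 0` has `|pᵢ r| ≥ r`, and `|sinc ρ| ≤ 1 - ρ²/2` for `|ρ| ≤ 1` while
`|sinc ρ| ≤ 1/π` beyond, so for `0 < r ≤ 1` that factor is at most `1 - r²/2` in absolute value.
All other factors are at most `1`, hence `1 - ∏ ≥ r²/2` uniformly in `p`. The infimum is also
at most `π²/6` (take `p` a unit vector); without such an upper bound the `liminf` in `ℝ` would
take its junk value.
-/

open Filter Topology

/-- The normalized sinc function `sinc(ρ) = sin(πρ)/(πρ)` for `ρ ≠ 0`, `sinc 0 = 1`. -/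
noncomputable def sincN (ρ : ℝ) : ℝ :=
  if ρ = 0 then 1 else Real.sin (Real.pi * ρ) / (Real.pi * ρ)

lemma Finset.abs_prod_le_abs_of_mem {ι R : Type*} [CommRing R] [LinearOrder R]
    [IsStrictOrderedRing R] {s : Finset ι} {f : ι → R} {i : ι} (hi : i ∈ s)
    (hf : ∀ j ∈ s, |f j| ≤ 1) :
    |∏ j ∈ s, f j| ≤ |f i| := by
  classical
  rw [← Finset.mul_prod_erase s f hi, abs_mul, Finset.abs_prod]
  exact mul_le_of_le_one_right (abs_nonneg _)
    (Finset.prod_le_one (fun _ _ => abs_nonneg _) fun j hj => hf j (Finset.mem_of_mem_erase hj))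

namespace Real

lemma sin_le_mul_one_sub_sq {x : ℝ} (hx₀ : 0 ≤ x) (hx : x ≤ π) :
    sin x ≤ x * (1 - x ^ 2 / (2 * π ^ 2)) := by
  have hcos : cos (x / 2) ≤ 1 - x ^ 2 / (2 * π ^ 2) := by
    have := cos_le_one_sub_mul_cos_sq (x := x / 2)
      (by rw [abs_of_nonneg (by positivity)]; linarith)
    convert this using 2
    field_simp
  have hcos₀ : 0 ≤ cos (x / 2) := cos_nonneg_of_mem_Icc ⟨by linarith [pi_pos], by linarith⟩
  calc sin x = 2 * sin (x / 2) * cos (x / 2) := by rw [← sin_two_mul]; ring_nf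
    _ ≤ 2 * (x / 2) * cos (x / 2) := by gcongr; exact sin_le (by positivity)
    _ ≤ x * (1 - x ^ 2 / (2 * π ^ 2)) := by nlinarith

lemma abs_sinc_le_one_sub_sq_of_abs_le {x : ℝ} (hx : |x| ≤ π) :
    |sinc x| ≤ 1 - x ^ 2 / (2 * π ^ 2) := by
  wlog hx₀ : 0 ≤ x generalizing x
  · simpa using this (x := -x) (by rwa [abs_neg]) (by linarith)
  rw [abs_of_nonneg hx₀] at hx
  rcases hx₀.eq_or_lt with rfl | hx₀
  · simp
  have hsin₀ : 0 ≤ sin x := sin_nonneg_of_nonneg_of_le_pi hx₀.le hx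
  rw [sinc_of_ne_zero hx₀.ne', abs_of_nonneg (by positivity), div_le_iff₀ hx₀]
  linarith [sin_le_mul_one_sub_sq hx₀.le hx]

lemma abs_sinc_le_one_sub_sq_of_le_abs {x s : ℝ} (hs₀ : 0 ≤ s) (hs : s ≤ π) (hsx : s ≤ |x|) :
    |sinc x| ≤ 1 - s ^ 2 / (2 * π ^ 2) := by
  have hpi := pi_pos
  rcases le_or_gt |x| π with hx | hx
  · calc |sinc x| ≤ 1 - x ^ 2 / (2 * π ^ 2) := abs_sinc_le_one_sub_sq_of_abs_le hx
      _ ≤ 1 - s ^ 2 / (2 * π ^ 2) := by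
        rw [← sq_abs x]; gcongr
  · have hx₀ : x ≠ 0 := by rintro rfl; simp at hx; linarith
    have h1 : |sinc x| ≤ 1 / 2 := by
      rw [sinc_of_ne_zero hx₀, abs_div, div_le_iff₀ (by positivity)]
      nlinarith [abs_sin_le_one x, two_le_pi]
    have h2 : s ^ 2 / (2 * π ^ 2) ≤ 1 / 2 := by
      rw [div_le_iff₀ (by positivity)]; nlinarith
    linarith

lemma one_sub_sinc_le (x : ℝ) : 1 - sinc x ≤ x ^ 2 / 6 := by
  rcases eq_or_ne x 0 with rfl | hx
  · simp
  have hx' : 0 < |x| := abs_pos.mpr hx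
  calc 1 - sinc x = (x - sin x) / x := by rw [sinc_of_ne_zero hx]; field_simp
    _ ≤ |x - sin x| / |x| := by rw [← abs_div]; exact le_abs_self _
    _ ≤ |x| ^ 3 / 6 / |x| := by gcongr; exact abs_sub_sin_le x
    _ = x ^ 2 / 6 := by rw [← sq_abs x]; field_simp

end Real

open Real

lemma sincN_eq_sinc (ρ : ℝ) : sincN ρ = sinc (π * ρ) := by
  simp [sincN, sinc_apply, pi_ne_zero]

lemma abs_sincN_le_one (ρ : ℝ) : |sincN ρ| ≤ 1 := by
  rw [sincN_eq_sinc]; exact abs_sinc_le_one _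

lemma abs_sincN_le_one_sub_sq {ρ s : ℝ} (hs₀ : 0 ≤ s) (hs : s ≤ 1) (hsρ : s ≤ |ρ|) :
    |sincN ρ| ≤ 1 - s ^ 2 / 2 := by
  have hpi := pi_pos
  have := abs_sinc_le_one_sub_sq_of_le_abs (x := π * ρ) (s := π * s) (by positivity)
    (by nlinarith) (by rw [abs_mul, abs_of_pos hpi]; gcongr)
  rw [sincN_eq_sinc]
  convert this using 2
  field_simp

lemma one_sub_sincN_le (ρ : ℝ) : 1 - sincN ρ ≤ π ^ 2 * ρ ^ 2 / 6 := by
  rw [sincN_eq_sinc, ← mul_pow]; exact one_sub_sinc_le _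

section

variable {ι : Type*} [Fintype ι]

noncomputable def sincDefect (p : ι → ℤ) (r : ℝ) : ℝ :=
  1 - ∏ i ∈ Finset.univ.filter (fun i => p i ≠ 0), sincN (p i * r)

lemma sq_div_two_le_sincDefect {p : ι → ℤ} (hp : p ≠ 0) {r : ℝ} (hr₀ : 0 < r) (hr : r ≤ 1) :
    r ^ 2 / 2 ≤ sincDefect p r := by
  obtain ⟨i, hi⟩ : ∃ i, p i ≠ 0 := Function.ne_iff.mp hp
  have hr_le : r ≤ |(p i : ℝ) * r| := by
    rw [abs_mul, abs_of_pos hr₀]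
    exact le_mul_of_one_le_left hr₀.le (by exact_mod_cast Int.one_le_abs hi)
  have hi' : i ∈ Finset.univ.filter (fun j => p j ≠ 0) := by simpa using hi
  have hprod := Finset.abs_prod_le_abs_of_mem hi' fun j _ => abs_sincN_le_one ((p j : ℝ) * r)
  have hsinc := abs_sincN_le_one_sub_sq hr₀.le hr hr_le
  unfold sincDefect
  linarith [le_abs_self (∏ i ∈ Finset.univ.filter (fun i => p i ≠ 0), sincN (p i * r))]

lemma sincDefect_single [DecidableEq ι] (i : ι) (r : ℝ) :
    sincDefect (Pi.single i 1) r = 1 - sincN r := by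
  have : Finset.univ.filter (fun j => (Pi.single i 1 : ι → ℤ) j ≠ 0) = {i} := by
    ext j; by_cases h : j = i <;> simp [h]
  simp [sincDefect, this]

lemma abs_div_sq_mul_one_sub_sincN_le {r : ℝ} (hr : r ≠ 0) :
    |(1 / r ^ 2) * (1 - sincN r)| ≤ π ^ 2 / 6 := by
  have hpos : 0 ≤ 1 - sincN r := by linarith [le_abs_self (sincN r), abs_sincN_le_one r]
  rw [abs_of_nonneg (by positivity), one_div_mul_eq_div, div_le_iff₀ (by positivity)]
  linarith [one_sub_sincN_le r]

theorem half_le_liminf_iInf_sincDefect [Nonempty ι] :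
    1 / 2 ≤ liminf (fun r : ℝ => ⨅ p : {p : ι → ℤ // p ≠ 0}, |(1 / r ^ 2) * sincDefect p.1 r|)
      (𝓝[>] 0) := by
  classical
  obtain ⟨i⟩ := ‹Nonempty ι›
  have hp : (Pi.single i 1 : ι → ℤ) ≠ 0 := by simp
  have : Nonempty {p : ι → ℤ // p ≠ 0} := ⟨⟨_, hp⟩⟩
  have hlower : ∀ᶠ r in 𝓝[>] (0 : ℝ),
      1 / 2 ≤ ⨅ p : {p : ι → ℤ // p ≠ 0}, |(1 / r ^ 2) * sincDefect p.1 r| := by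
    filter_upwards [Ioo_mem_nhdsGT one_pos] with r ⟨hr₀, hr⟩
    refine le_ciInf fun p => le_abs.mpr (Or.inl ?_)
    rw [one_div_mul_eq_div, le_div_iff₀ (by positivity)]
    linarith [sq_div_two_le_sincDefect p.2 hr₀ hr.le]
  have hupper : ∀ᶠ r in 𝓝[>] (0 : ℝ),
      ⨅ p : {p : ι → ℤ // p ≠ 0}, |(1 / r ^ 2) * sincDefect p.1 r| ≤ π ^ 2 / 6 := by
    filter_upwards [self_mem_nhdsWithin] with r hr
    refine (ciInf_le ⟨0, ?_⟩ ⟨_, hp⟩).trans ?_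
    · rintro _ ⟨p, rfl⟩; positivity
    · rw [sincDefect_single]; exact abs_div_sq_mul_one_sub_sincN_le hr.ne'
  exact le_liminf_of_le (isBoundedUnder_of_eventually_le hupper).isCoboundedUnder_ge hlower

end

/-- `liminf_{r → 0⁺} inf_{0 ≠ p ∈ ℤ^m} | r⁻² (1 − ∏_{i : pᵢ ≠ 0} sinc(pᵢ r)) | > 0`. -/
theorem liminf_inf_sinc_pos (m : ℕ) (hm : 1 ≤ m) :
    0 < Filter.liminf (fun r : ℝ =>
        ⨅ p : {p : Fin m → ℤ // p ≠ 0},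
          |(1 / r ^ 2) *
            (1 - ∏ i ∈ Finset.univ.filter (fun i => p.1 i ≠ 0), sincN ((p.1 i : ℝ) * r))|)
      (𝓝[>] (0 : ℝ)) :=
  have : Nonempty (Fin m) := ⟨⟨0, hm⟩⟩
  one_half_pos.trans_le half_le_liminf_iInf_sincDefect
end
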